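/- Given a CSP instance, the 1-safe Petri net constructed from it reaches the final marking (one token in place g, zero elsewhere) from the initial marking (one token in each variable place qi, zero elsewhere) iff the CSP instance has a satisfying assignment. -/

import Mathlib

/-- A Petri net: places `P`, transitions `T`, incidence functions. -/
structure PetriNet (P T : Type) where
  Pre : P → T → ℕ
  Post : P → T → ℕ

variable {P T : Type}

def enabled (N : PetriNet P T) (M : P → ℕ) (t : T) : Prop := ∀ p, N.Pre p t ≤ M p

def fire (N : PetriNet P T) (M : P → ℕ) (t : T) : P → ℕ :=
  fun p => M p - N.Pre p t + N.Post p t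

def step (N : PetriNet P T) (M M' : P → ℕ) : Prop :=
  ∃ t, enabled N M t ∧ M' = fire N M t

def reachable (N : PetriNet P T) (M0 M : P → ℕ) : Prop :=
  Relation.ReflTransGen (step N) M0 M

/-- `1`-safety: every reachable marking has at most one token per place. -/
def oneSafe (N : PetriNet P T) (M0 : P → ℕ) : Prop :=
  ∀ M, reachable N M0 M → ∀ p, M p ≤ 1

def incident (N : PetriNet P T) (p : P) (t : T) : Prop := 1 ≤ N.Pre p t + N.Post p t


/-- A CSP instance with `n` variables, `m` constraints and domain `Fin dom`: each
constraint has a scope and a set of admissible tuples (given as assignments, compared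
only on the scope). -/
structure CSP (n m dom : ℕ) where
  scope : Fin m → Finset (Fin n)
  adm : Fin m → Finset (Fin n → Fin dom)

/-- Places of the net constructed from a CSP instance. -/
inductive CPl (n m dom : ℕ) : Type
  | q (i : Fin n)
  | qv (i : Fin n) (j : Fin m) (d : Fin dom)
  | C (j : Fin m)
  | g
deriving DecidableEq

/-- Transitions of the net constructed from a CSP instance. -/
inductive CTr (n m dom : ℕ) : Type
  | t (i : Fin n) (d : Fin dom)
  | tc (i : Fin n) (j : Fin m) (d : Fin dom)
  | con (j : Fin m) (f : Fin n → Fin dom)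
  | fin

variable {n m dom : ℕ}

/-- Input incidence of the CSP net: `t i d` consumes the token of `q i`; the cleanup
`tc i j d` consumes a token from `q[i]_j^d`; the constraint-check `con j f` (for an
admissible tuple `f`) consumes the tokens `q[i]_j^{f i}` for the variables of its
scope (non-admissible tuples are blocked); `fin` consumes one token from each `C j`. -/
def cspPre (I : CSP n m dom) : CPl n m dom → CTr n m dom → ℕ := fun p τ =>
  match τ with
  | .t i _ => if p = .q i then 1 else 0
  | .tc i j d => if p = .qv i j d then 1 else 0
  | .con j f => if f ∈ I.adm j then (if ∃ i ∈ I.scope j, p = .qv i j (f i) then 1 else 0)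
      else (if p = .C j then 2 else 0)
  | .fin => if ∃ j, p = .C j then 1 else 0

/-- Output incidence of the CSP net: `t i d` puts a token in `q[i]_j^d` for every
constraint `j` containing `i`; `con j f` puts a token in `C j`; `fin` puts a token
in `g`. -/
def cspPost (I : CSP n m dom) : CPl n m dom → CTr n m dom → ℕ := fun p τ =>
  match τ with
  | .t i d => if ∃ j, i ∈ I.scope j ∧ p = .qv i j d then 1 else 0
  | .tc _ _ _ => 0
  | .con j f => if f ∈ I.adm j then (if p = .C j then 1 else 0) else 0
  | .fin => if p = .g then 1 else 0

/-- The Petri net constructed from the CSP instance. -/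
def cspNet (I : CSP n m dom) : PetriNet (CPl n m dom) (CTr n m dom) :=
  ⟨cspPre I, cspPost I⟩

/-- The initial marking: one token in each variable place `q i`. -/
def cspM0 : CPl n m dom → ℕ := fun p =>
  match p with
  | .q _ => 1
  | _ => 0

/-- The final marking: a single token in `g`. -/
def cspMf : CPl n m dom → ℕ := fun p =>
  match p with
  | .g => 1
  | _ => 0

/-- The CSP instance is satisfiable: some assignment restricts, on the scope of each
constraint, to an admissible tuple. -/
def Satisfiable (I : CSP n m dom) : Prop :=
  ∃ a : Fin n → Fin dom, ∀ j : Fin m, ∃ f ∈ I.adm j, ∀ i ∈ I.scope j, f i = a i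

/-!
The forward direction rests on an invariant. Since no transition feeds `q i`, the transitions
`t i d` fire at most once per variable, so the values chosen so far form a partial assignment
`a`. Every token in `q[i]_j^d` was produced by `t i d`, so `a i = some d`; a token in `C j`
needs an admissible tuple agreeing with `a` on the scope of `C j`, and a token in `g` needs one
for every constraint. In the final marking every `q i` is empty, so `a` is total and satisfies
all constraints.

Conversely, from a satisfying assignment `a` fire `t i (a i)` for every variable, then for every
constraint the check transition of a matching admissible tuple, which consumes exactly the tokens
produced for it, and finally the transition into `g`.
-/

section PetriNet

variable {N : PetriNet P T}

theorem fire_le_of_post_eq_zero {M : P → ℕ} {t : T} {p : P} (h : N.Post p t = 0) :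
    fire N M t p ≤ M p := by
  simp only [fire, h]
  omega

theorem reachable_of_step_insert {ι : Type*} [DecidableEq ι] (F : Finset ι → P → ℕ)
    (h : ∀ S x, x ∉ S → step N (F S) (F (insert x S))) (S : Finset ι) :
    reachable N (F ∅) (F S) := by
  induction S using Finset.induction_on with
  | empty => exact .refl
  | insert x S hx ih => exact ih.tail (h S x hx)

end PetriNet

theorem Function.update_apply_of_eq_none_of_eq_some {ι α : Type*} [DecidableEq ι]
    {a : ι → Option α} {i k : ι} {x : α} (hi : a i = none) (hk : a k = some x)
    (y : Option α) : Function.update a i y k = some x := by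
  rw [Function.update_of_ne (by rintro rfl; simp_all)]
  exact hk

def CTr.record (a : Fin n → Option (Fin dom)) : CTr n m dom → Fin n → Option (Fin dom)
  | .t i d => Function.update a i (some d)
  | _ => a

namespace CSP

variable (I : CSP n m dom)

def SatisfiesAt (a : Fin n → Option (Fin dom)) (j : Fin m) : Prop :=
  ∃ f ∈ I.adm j, ∀ i ∈ I.scope j, a i = some (f i)

variable {I}

theorem SatisfiesAt.update {a : Fin n → Option (Fin dom)} {j : Fin m} {i : Fin n}
    (h : I.SatisfiesAt a j) (hi : a i = none) (y : Option (Fin dom)) :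
    I.SatisfiesAt (Function.update a i y) j := by
  obtain ⟨f, hf, hfa⟩ := h
  exact ⟨f, hf, fun k hk => Function.update_apply_of_eq_none_of_eq_some hi (hfa k hk) y⟩

theorem satisfiable_of_forall_satisfiesAt {a : Fin n → Option (Fin dom)}
    (ha : ∀ i, (a i).isSome) (h : ∀ j, I.SatisfiesAt a j) : Satisfiable I := by
  refine ⟨fun i => (a i).get (ha i), fun j => ?_⟩
  obtain ⟨f, hf, hfa⟩ := h j
  exact ⟨f, hf, fun i hi => by simp [hfa i hi]⟩

variable (I)

structure Invariant (a : Fin n → Option (Fin dom)) (M : CPl n m dom → ℕ) : Prop where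
  q : ∀ i, M (.q i) = if a i = none then 1 else 0
  qv : ∀ i j d, 1 ≤ M (.qv i j d) → a i = some d
  C : ∀ j, 1 ≤ M (.C j) → I.SatisfiesAt a j
  g : 1 ≤ M .g → ∀ j, I.SatisfiesAt a j

variable {I} {a : Fin n → Option (Fin dom)} {M : CPl n m dom → ℕ}

theorem invariant_cspM0 : I.Invariant (fun _ => none) cspM0 where
  q _ := rfl
  qv _ _ _ h := by simp [cspM0] at h
  C _ h := by simp [cspM0] at h
  g h := by simp [cspM0] at h

theorem Invariant.fire_t (h : I.Invariant a M) {i : Fin n} {d : Fin dom}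
    (hen : enabled (cspNet I) M (.t i d)) :
    I.Invariant (Function.update a i (some d)) (fire (cspNet I) M (.t i d)) := by
  have hai : a i = none := by
    by_contra hne
    simpa [cspNet, cspPre, h.q i, hne] using hen (.q i)
  constructor
  · intro k
    rcases eq_or_ne k i with rfl | hk
    · simp [fire, cspNet, cspPre, cspPost, h.q, hai]
    · simp [fire, cspNet, cspPre, cspPost, h.q, hk]
  · intro k j e hpos
    by_cases hnew : k = i ∧ e = d
    · obtain ⟨rfl, rfl⟩ := hnew
      simp
    · have hold : 1 ≤ M (.qv k j e) :=
        hpos.trans (fire_le_of_post_eq_zero (by simp [cspNet, cspPost]; tauto))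
      exact Function.update_apply_of_eq_none_of_eq_some hai (h.qv k j e hold) _
  · intro j hpos
    exact (h.C j (by simpa [fire, cspNet, cspPre, cspPost] using hpos)).update hai _
  · intro hpos j
    exact (h.g (by simpa [fire, cspNet, cspPre, cspPost] using hpos) j).update hai _

theorem Invariant.fire_tc (h : I.Invariant a M) (i : Fin n) (j : Fin m) (d : Fin dom) :
    I.Invariant a (fire (cspNet I) M (.tc i j d)) where
  q k := by simpa [fire, cspNet, cspPre, cspPost] using h.q k
  qv k j' e hpos := h.qv k j' e (hpos.trans (fire_le_of_post_eq_zero rfl))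
  C j' hpos := h.C j' (by simpa [fire, cspNet, cspPre, cspPost] using hpos)
  g hpos := h.g (by simpa [fire, cspNet, cspPre, cspPost] using hpos)

theorem Invariant.fire_con (h : I.Invariant a M) {j : Fin m} {f : Fin n → Fin dom}
    (hen : enabled (cspNet I) M (.con j f)) : I.Invariant a (fire (cspNet I) M (.con j f)) where
  q k := by simpa [fire, cspNet, cspPre, cspPost] using h.q k
  qv k j' e hpos :=
    h.qv k j' e (hpos.trans (fire_le_of_post_eq_zero (by simp [cspNet, cspPost])))
  C j' hpos := by
    by_cases hj : f ∈ I.adm j ∧ j' = j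
    · obtain ⟨hf, rfl⟩ := hj
      refine ⟨f, hf, fun k hk => h.qv k j' (f k) ?_⟩
      simpa [cspNet, cspPre, hf, hk] using hen (.qv k j' (f k))
    · exact h.C j' (hpos.trans (fire_le_of_post_eq_zero (by simp [cspNet, cspPost]; tauto)))
  g hpos := h.g (by simpa [fire, cspNet, cspPre, cspPost] using hpos)

theorem Invariant.fire_fin (h : I.Invariant a M) (hen : enabled (cspNet I) M .fin) :
    I.Invariant a (fire (cspNet I) M .fin) where
  q k := by simpa [fire, cspNet, cspPre, cspPost] using h.q k
  qv k j e hpos := h.qv k j e (by simpa [fire, cspNet, cspPre, cspPost] using hpos)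
  C j hpos := h.C j (hpos.trans (fire_le_of_post_eq_zero (by simp [cspNet, cspPost])))
  g _ j := h.C j (by simpa [cspNet, cspPre] using hen (.C j))

theorem Invariant.fire {τ : CTr n m dom} (h : I.Invariant a M) (hen : enabled (cspNet I) M τ) :
    I.Invariant (τ.record a) (fire (cspNet I) M τ) := by
  cases τ with
  | t i d => exact h.fire_t hen
  | tc i j d => exact h.fire_tc i j d
  | con j f => exact h.fire_con hen
  | fin => exact h.fire_fin hen

theorem exists_invariant_of_reachable (h : reachable (cspNet I) cspM0 M) :
    ∃ a, I.Invariant a M := by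
  induction h with
  | refl => exact ⟨_, invariant_cspM0⟩
  | tail _ hstep ih =>
    obtain ⟨a, ha⟩ := ih
    obtain ⟨τ, hen, rfl⟩ := hstep
    exact ⟨_, ha.fire hen⟩

theorem Invariant.satisfiable (h : I.Invariant a cspMf) : Satisfiable I := by
  refine satisfiable_of_forall_satisfiesAt (fun i => ?_) (h.g le_rfl)
  rw [Option.isSome_iff_ne_none]
  intro hnone
  simpa [cspMf, hnone] using h.q i

variable (I)

/-- The marking reached by firing `t i (a i)` for `i ∈ S` and then, for `j ∈ J`, the check
of constraint `j` by a tuple agreeing with `a`. -/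
def stageMarking (a : Fin n → Fin dom) (S : Finset (Fin n)) (J : Finset (Fin m)) :
    CPl n m dom → ℕ
  | .q i => if i ∈ S then 0 else 1
  | .qv i j d => if i ∈ S ∧ i ∈ I.scope j ∧ d = a i ∧ j ∉ J then 1 else 0
  | .C j => if j ∈ J then 1 else 0
  | .g => 0

variable (a : Fin n → Fin dom)

theorem step_stageMarking_assign {S : Finset (Fin n)} {i : Fin n} (hi : i ∉ S) :
    step (cspNet I) (I.stageMarking a S ∅) (I.stageMarking a (insert i S) ∅) := by
  refine ⟨.t i (a i), fun p => ?_, funext fun p => ?_⟩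
  · cases p <;> simp [cspNet, cspPre, stageMarking]
    grind
  · cases p <;> simp [fire, cspNet, cspPre, cspPost, stageMarking] <;> grind

theorem step_stageMarking_check {J : Finset (Fin m)} {j : Fin m} (hj : j ∉ J)
    {f : Fin n → Fin dom} (hf : f ∈ I.adm j) (hfa : ∀ i ∈ I.scope j, f i = a i) :
    step (cspNet I) (I.stageMarking a .univ J) (I.stageMarking a .univ (insert j J)) := by
  refine ⟨.con j f, fun p => ?_, funext fun p => ?_⟩
  · cases p <;> simp [cspNet, cspPre, stageMarking, hf]
    grind
  · cases p <;> simp [fire, cspNet, cspPre, cspPost, stageMarking, hf] <;> grind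

theorem step_stageMarking_final : step (cspNet I) (I.stageMarking a .univ .univ) cspMf := by
  refine ⟨.fin, fun p => ?_, funext fun p => ?_⟩
  · cases p <;> simp [cspNet, cspPre, stageMarking]
  · cases p <;> simp [fire, cspNet, cspPre, cspPost, stageMarking, cspMf]

variable {I} in
theorem reachable_of_satisfiable (h : Satisfiable I) : reachable (cspNet I) cspM0 cspMf := by
  obtain ⟨a, ha⟩ := h
  choose f hf hfa using ha
  have hinit : I.stageMarking a ∅ ∅ = cspM0 := by
    funext p
    cases p <;> simp [stageMarking, cspM0]
  have hassign := reachable_of_step_insert (fun S => I.stageMarking a S ∅)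
    (fun _ _ hi => step_stageMarking_assign I a hi) .univ
  have hcheck := reachable_of_step_insert (fun J => I.stageMarking a .univ J)
    (fun _ j hj => step_stageMarking_check I a hj (hf j) (hfa j)) .univ
  rw [hinit] at hassign
  exact (hassign.trans hcheck).tail (step_stageMarking_final I a)

end CSP

/-- Correctness of the reduction from CSP to reachability in 1-safe Petri nets: the
final marking (one token in `g`, none elsewhere) is reachable from the initial marking
(one token in each `q i`) iff the CSP instance is satisfiable. -/
theorem cspNet_reach_iff_satisfiable (I : CSP n m dom) :
    reachable (cspNet I) cspM0 cspMf ↔ Satisfiable I := by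
  refine ⟨fun h => ?_, CSP.reachable_of_satisfiable⟩
  obtain ⟨a, ha⟩ := CSP.exists_invariant_of_reachable h
  exact ha.satisfiable
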